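/- arXiv:math/0611501 — 6 statements merged into one kernel-verified Lean document; each statement's English description precedes it below -/
import Mathlib

section
/- Let A be a 0-dialgebra over a field k satisfying x⊣y = y⊢x for all x,y, and set xy := x⊢y. Then (a) the identity (JL0): (xy)z = (yx)z holds in (A,·); and (b) the dialgebra A satisfies the first di-Jordan identity x₁⊣(x₂⊣(x₃⊣x₄)) + (x₂⊢(x₁⊣x₃))⊣x₄ + x₃⊢(x₂⊢(x₁⊣x₄)) = (x₁⊣x₂)⊣(x₃⊣x₄) + (x₁⊣x₃)⊣(x₂⊣x₄) + (x₃⊢x₂)⊢(x₁⊣x₄) if and only if (A,·) satisfies (JL1): ((x₄x₃)x₂)x₁ + x₄(x₂(x₃x₁)) + x₃(x₂(x₄x₁)) = (x₄x₃)(x₂x₁) + (x₄x₂)(x₃x₁) + (x₃x₂)(x₄x₁). -/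
/-- Let `A` be a 0-dialgebra satisfying `x ⊣ y = y ⊢ x`, and put
`xy := x ⊢ y`.  Then (a) `(xy)z = (yx)z`; and (b) the first di-Jordan identity
holds in `(A, ⊣, ⊢)` if and only if the identity (JL1) holds in `(A, ·)`. -/
theorem commutative_zeroDialgebra_diJordan_one
    {k : Type*} [Field k] {A : Type*} [AddCommGroup A] [Module k A]
    (l r : A →ₗ[k] A →ₗ[k] A)
    (h01 : ∀ x y z : A, r (l x y) z = r (r x y) z)
    (h02 : ∀ x y z : A, l x (r y z) = l x (l y z))
    (hcomm : ∀ x y : A, l x y = r y x) :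
    (∀ x y z : A, r (r x y) z = r (r y x) z) ∧
    ((∀ x₁ x₂ x₃ x₄ : A,
        l x₁ (l x₂ (l x₃ x₄)) + l (r x₂ (l x₁ x₃)) x₄ + r x₃ (r x₂ (l x₁ x₄)) =
        l (l x₁ x₂) (l x₃ x₄) + l (l x₁ x₃) (l x₂ x₄) + r (r x₃ x₂) (l x₁ x₄)) ↔
      (∀ x₁ x₂ x₃ x₄ : A,
        r (r (r x₄ x₃) x₂) x₁ + r x₄ (r x₂ (r x₃ x₁)) + r x₃ (r x₂ (r x₄ x₁)) =
        r (r x₄ x₃) (r x₂ x₁) + r (r x₄ x₂) (r x₃ x₁) + r (r x₃ x₂) (r x₄ x₁))) := by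
  constructor
  · intro x y z
    have h := h01 x y z
    rw [hcomm] at h
    exact h.symm
  · simp only [hcomm]
end

section
/- Let A be a k-algebra (k a field of characteristic 0, bilinear product xy) satisfying the identities (JL0): (xy)z = (yx)z, (JL1): ((x₄x₃)x₂)x₁ + x₄(x₂(x₃x₁)) + x₃(x₂(x₄x₁)) = (x₄x₃)(x₂x₁) + (x₄x₂)(x₃x₁) + (x₃x₂)(x₄x₁), and (JL2): x₁((x₄x₃)x₂) + x₄((x₃x₁)x₂) + x₃((x₄x₁)x₂) = (x₄x₃)(x₁x₂) + (x₁x₃)(x₄x₂) + (x₄x₁)(x₃x₂). Then for all a,b ∈ A the commutator D := L_a L_b − L_b L_a of left multiplication operators (L_a(x) = ax) is a derivation of A: D(xy) = D(x)y + xD(y) for all x,y ∈ A. -/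
/-- Let `A` be an algebra over a field `k` of characteristic 0
satisfying the Jordan-dialgebra identities (JL0), (JL1), (JL2).  Then for all
`a, b ∈ A` the commutator `D = L_a L_b - L_b L_a` of left multiplications is a
derivation: `D(xy) = D(x)y + xD(y)`. -/
theorem jordanDialgebra_commutator_is_derivation
    {k : Type*} [Field k] [CharZero k] {A : Type*} [AddCommGroup A] [Module k A]
    (mul : A →ₗ[k] A →ₗ[k] A)
    (hJL0 : ∀ x y z : A, mul (mul x y) z = mul (mul y x) z)
    (hJL1 : ∀ x₁ x₂ x₃ x₄ : A,
      mul (mul (mul x₄ x₃) x₂) x₁ + mul x₄ (mul x₂ (mul x₃ x₁)) +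
        mul x₃ (mul x₂ (mul x₄ x₁)) =
      mul (mul x₄ x₃) (mul x₂ x₁) + mul (mul x₄ x₂) (mul x₃ x₁) +
        mul (mul x₃ x₂) (mul x₄ x₁))
    (hJL2 : ∀ x₁ x₂ x₃ x₄ : A,
      mul x₁ (mul (mul x₄ x₃) x₂) + mul x₄ (mul (mul x₃ x₁) x₂) +
        mul x₃ (mul (mul x₄ x₁) x₂) =
      mul (mul x₄ x₃) (mul x₁ x₂) + mul (mul x₁ x₃) (mul x₄ x₂) +
        mul (mul x₄ x₁) (mul x₃ x₂)) :
    ∀ a b x y : A,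
      mul a (mul b (mul x y)) - mul b (mul a (mul x y)) =
        mul (mul a (mul b x) - mul b (mul a x)) y +
          mul x (mul a (mul b y) - mul b (mul a y)) := by
  intro a b x y
  have h1 := hJL0 (mul a x) b y
  have h2 := hJL0 (mul b x) a y
  have h3 := hJL0 a b (mul x y)
  have h4 := hJL0 a x (mul b y)
  have h5 := hJL0 b x (mul a y)
  have h6 := hJL1 y a x b
  have h7 := hJL1 y b x a
  simp only [map_sub, LinearMap.sub_apply]
  linear_combination (norm := abel) -h1 + h2 + h3 + h4 - h5 - h6 + h7
end

section
/- Let C be an associative conformal algebra over a field k of characteristic 0. Define two bilinear operations on C by a⊢b := a₍₀₎b and a⊣b := Σ_{s≥0} (1/s!)(−T)^s(a₍s₎b) (a finite sum by locality). Then (C,⊣,⊢) is an associative dialgebra: (x⊣y)⊢z = (x⊢y)⊢z, x⊣(y⊢z) = x⊣(y⊣z), (x⊢y)⊢z = x⊢(y⊢z), (x⊣y)⊣z = x⊣(y⊣z), and (x⊢y)⊣z = x⊢(y⊣z) for all x,y,z ∈ C. -/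
/-- The operation `a ⊣ b := ∑_{s ≥ 0} (1/s!) (-T)^s (a₍ₛ₎b)` on a conformal
algebra (a finite sum by locality). -/
noncomputable def conformalDashLeft
    {k : Type*} [Field k] {C : Type*} [AddCommGroup C] [Module k C]
    (T : C →ₗ[k] C) (p : ℕ → C →ₗ[k] C →ₗ[k] C) : C → C → C :=
  fun a b => ∑ᶠ s : ℕ, ((s.factorial : k)⁻¹) • ((-T) ^ s) (p s a b)


section Aux
set_option linter.unusedSectionVars false
set_option maxHeartbeats 1000000
variable {k : Type*} [Field k] [CharZero k] {C : Type*} [AddCommGroup C] [Module k C]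
  (T : C →ₗ[k] C) (p : ℕ → C →ₗ[k] C →ₗ[k] C)

lemma cdl_def (a b : C) :
    conformalDashLeft T p a b = ∑ᶠ s : ℕ, ((s.factorial : k)⁻¹) • ((-T) ^ s) (p s a b) := rfl

lemma fact_succ_inv (s : ℕ) :
    (((s+1).factorial : k))⁻¹ * ((s+1 : ℕ) : k) = ((s.factorial : k))⁻¹ := by
  have h1 : ((s+1 : ℕ) : k) ≠ 0 := Nat.cast_ne_zero.2 (Nat.succ_ne_zero s)
  rw [Nat.factorial_succ, Nat.cast_mul, mul_inv, mul_comm (((s+1:ℕ):k))⁻¹,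
    mul_assoc, inv_mul_cancel₀ h1, mul_one]

lemma negT_pow_T (n : ℕ) (v : C) : ((-T)^n) (T v) = -(((-T)^(n+1)) v) := by
  rw [pow_succ, Module.End.mul_apply]
  simp

lemma cdl_eq_sum (a b : C) (N : ℕ) (hN : ∀ n, N ≤ n → p n a b = 0) :
    conformalDashLeft T p a b
      = ∑ s ∈ Finset.range N, ((s.factorial : k)⁻¹) • ((-T) ^ s) (p s a b) := by
  refine finsum_eq_sum_of_support_subset _ ?_
  intro s hs
  simp only [Function.mem_support, ne_eq] at hs
  by_contra h
  simp only [Finset.coe_range, Set.mem_Iio, not_lt] at h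
  exact hs (by rw [hN s h]; simp)

lemma pm_pow
    (hTl0 : ∀ a b : C, p 0 (T a) b = 0)
    (hTl : ∀ (n : ℕ) (a b : C), p (n + 1) (T a) b = -(((n + 1 : ℕ) : k)) • p n a b) :
    ∀ (t m : ℕ) (w z : C),
      p m (((-T) ^ t) w) z = ((t.factorial * m.choose t : ℕ) : k) • p (m - t) w z := by
  intro t
  induction t with
  | zero => intro m w z; simp
  | succ t ih =>
    intro m w z
    rw [pow_succ, Module.End.mul_apply, ih m ((-T) w) z]
    simp only [LinearMap.neg_apply, map_neg, LinearMap.neg_apply]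
    by_cases h : t < m
    · have hmt : m - t = (m - t - 1) + 1 := by omega
      rw [hmt, hTl (m - t - 1) w z]
      have hcoef : (t.factorial * m.choose t) * (m - t) = (t+1).factorial * m.choose (t+1) := by
        have h1 := Nat.choose_succ_right_eq m t
        rw [Nat.factorial_succ]
        calc t.factorial * m.choose t * (m - t) = t.factorial * (m.choose t * (m - t)) := by ring
          _ = t.factorial * (m.choose (t+1) * (t+1)) := by rw [h1]
          _ = (t + 1) * t.factorial * m.choose (t + 1) := by ring
      have hmt2 : m - (t + 1) = m - t - 1 := by omega
      have hcoef2 : (t.factorial * m.choose t) * (m - t - 1 + 1)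
          = (t+1).factorial * m.choose (t+1) := by rw [← hmt]; exact hcoef
      rw [hmt2]
      simp only [neg_smul, neg_neg, smul_smul, ← Nat.cast_mul]
      rw [hcoef2]
    · have h1 : m - t = 0 := by omega
      have h2 : m - (t+1) = 0 := by omega
      have h3 : m.choose (t+1) = 0 := Nat.choose_eq_zero_of_lt (by omega)
      rw [h1, h2, hTl0, h3]
      simp

lemma p0_pow
    (hTr0 : ∀ a b : C, p 0 a (T b) = T (p 0 a b)) :
    ∀ (s : ℕ) (x w : C), p 0 x (((-T) ^ s) w) = ((-T) ^ s) (p 0 x w) := by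
  intro s
  induction s with
  | zero => intro x w; simp
  | succ s ih =>
    intro x w
    rw [pow_succ', Module.End.mul_apply, Module.End.mul_apply, LinearMap.neg_apply,
      LinearMap.neg_apply, map_neg, hTr0, ih]


lemma cdl_T_right
    (hloc : ∀ a b : C, ∃ N : ℕ, ∀ n : ℕ, N ≤ n → p n a b = 0)
    (hTr0 : ∀ a b : C, p 0 a (T b) = T (p 0 a b))
    (hTr : ∀ (n : ℕ) (a b : C),
      p (n + 1) a (T b) = T (p (n + 1) a b) + ((n + 1 : ℕ) : k) • p n a b)
    (x b : C) : conformalDashLeft T p x (T b) = 0 := by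
  obtain ⟨N, hN⟩ := hloc x b
  have hloc' : ∀ n, N + 1 ≤ n → p n x (T b) = 0 := by
    intro n hn
    obtain ⟨m, rfl⟩ : ∃ m, n = m + 1 := ⟨n - 1, by omega⟩
    rw [hTr, hN (m+1) (by omega), hN m (by omega)]
    simp
  set g : ℕ → C := fun s => (s.factorial : k)⁻¹ • ((-T)^(s+1)) (p s x b) with hg
  have tel : ∀ M, ∑ s ∈ Finset.range (M+1),
      (s.factorial : k)⁻¹ • ((-T) ^ s) (p s x (T b)) = -(g M) := by
    intro M
    induction M with
    | zero =>
      rw [Finset.sum_range_one]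
      simp [hg, hTr0]
    | succ M ih =>
      rw [Finset.sum_range_succ, ih, hTr M x b, map_add, negT_pow_T, map_smul,
        smul_add, smul_neg, smul_smul, fact_succ_inv]
      simp only [hg]
      abel
  have h1 : conformalDashLeft T p x (T b)
      = ∑ s ∈ Finset.range (N+1), (s.factorial : k)⁻¹ • ((-T) ^ s) (p s x (T b)) :=
    cdl_eq_sum T p x (T b) (N+1) hloc'
  rw [h1, tel N, hg]
  simp [hN N le_rfl]

lemma cdl_add_right
    (hloc : ∀ a b : C, ∃ N : ℕ, ∀ n : ℕ, N ≤ n → p n a b = 0)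
    (a b c : C) :
    conformalDashLeft T p a (b + c)
      = conformalDashLeft T p a b + conformalDashLeft T p a c := by
  obtain ⟨N1, hN1⟩ := hloc a b
  obtain ⟨N2, hN2⟩ := hloc a c
  set N := max N1 N2 with hNdef
  have hb : ∀ n, N ≤ n → p n a b = 0 := fun n hn => hN1 n (le_trans (le_max_left _ _) hn)
  have hc : ∀ n, N ≤ n → p n a c = 0 := fun n hn => hN2 n (le_trans (le_max_right _ _) hn)
  have hbc : ∀ n, N ≤ n → p n a (b + c) = 0 := by
    intro n hn; rw [map_add, hb n hn, hc n hn, add_zero]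
  rw [cdl_eq_sum T p a (b+c) N hbc, cdl_eq_sum T p a b N hb, cdl_eq_sum T p a c N hc,
    ← Finset.sum_add_distrib]
  refine Finset.sum_congr rfl fun s _ => ?_
  rw [map_add, map_add, smul_add]

lemma cdl_shift
    (hloc : ∀ a b : C, ∃ N : ℕ, ∀ n : ℕ, N ≤ n → p n a b = 0)
    (y z : C) : ∃ u : C, conformalDashLeft T p y z = p 0 y z + T u := by
  obtain ⟨N, hN⟩ := hloc y z
  have hN' : ∀ n, N + 1 ≤ n → p n y z = 0 := fun n hn => hN n (by omega)
  refine ⟨∑ i ∈ Finset.range N, (-(((i+1).factorial : k)⁻¹)) • ((-T) ^ i) (p (i+1) y z), ?_⟩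
  rw [cdl_eq_sum T p y z (N+1) hN', Finset.sum_range_succ', map_sum]
  have h0 : ((Nat.factorial 0 : k))⁻¹ • ((-T) ^ 0) (p 0 y z) = p 0 y z := by simp
  rw [h0, add_comm]
  congr 1
  refine Finset.sum_congr rfl fun i _ => ?_
  simp [pow_succ', Module.End.mul_apply]

lemma hassoc01
    (hassoc : ∀ (n m : ℕ) (a b c : C),
      p n a (p m b c) =
        ∑ s ∈ Finset.range (n + 1), ((n.choose s : ℕ) : k) • p (m + s) (p (n - s) a b) c)
    (s : ℕ) (x y z : C) : p 0 x (p s y z) = p s (p 0 x y) z := by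
  rw [hassoc 0 s]
  simp

lemma pm_cdl
    (hloc : ∀ a b : C, ∃ N : ℕ, ∀ n : ℕ, N ≤ n → p n a b = 0)
    (hTl0 : ∀ a b : C, p 0 (T a) b = 0)
    (hTl : ∀ (n : ℕ) (a b : C), p (n + 1) (T a) b = -(((n + 1 : ℕ) : k)) • p n a b)
    (hassoc : ∀ (n m : ℕ) (a b c : C),
      p n a (p m b c) =
        ∑ s ∈ Finset.range (n + 1), ((n.choose s : ℕ) : k) • p (m + s) (p (n - s) a b) c)
    (m : ℕ) (x y z : C) :
    p m (conformalDashLeft T p x y) z = p m x (p 0 y z) := by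
  obtain ⟨N0, hN0⟩ := hloc x y
  set N := max N0 (m+1) with hNdef
  have hb : ∀ n, N ≤ n → p n x y = 0 := fun n hn => hN0 n (le_trans (le_max_left _ _) hn)
  rw [cdl_eq_sum T p x y N hb]
  simp only [map_sum, map_smul, LinearMap.sum_apply, LinearMap.smul_apply]
  have hterm : ∀ t, ((t.factorial : k)⁻¹) • (p m (((-T) ^ t) (p t x y))) z
      = ((m.choose t : ℕ) : k) • p (m - t) (p t x y) z := by
    intro t
    rw [pm_pow T p hTl0 hTl t m (p t x y) z, smul_smul, Nat.cast_mul, ← mul_assoc,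
      inv_mul_cancel₀ (Nat.cast_ne_zero.2 t.factorial_ne_zero), one_mul]
  rw [Finset.sum_congr rfl (fun t _ => hterm t)]
  have hsub : ∑ t ∈ Finset.range N, ((m.choose t : ℕ) : k) • p (m - t) (p t x y) z
      = ∑ t ∈ Finset.range (m+1), ((m.choose t : ℕ) : k) • p (m - t) (p t x y) z := by
    symm
    refine Finset.sum_subset (Finset.range_subset_range.2 (le_max_right _ _)) ?_
    intro t ht htn
    have hmt : m < t := by
      simp only [Finset.mem_range, not_lt] at htn
      omega
    rw [Nat.choose_eq_zero_of_lt hmt]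
    simp
  rw [hsub, hassoc m 0 x y z,
    ← Finset.sum_range_reflect
      (fun s => ((m.choose s : ℕ) : k) • p (0 + s) (p (m - s) x y) z) (m+1)]
  refine Finset.sum_congr rfl fun j hj => ?_
  have hj' : j ≤ m := by
    have := Finset.mem_range.1 hj
    omega
  simp only [Nat.add_sub_cancel]
  rw [Nat.sub_sub_self hj', Nat.choose_symm hj', zero_add]

end Aux

/-- An associative conformal algebra `C` over a field of
characteristic 0, equipped with `a ⊢ b := a₍₀₎b` and
`a ⊣ b := ∑_{s ≥ 0} (1/s!)(-T)^s(a₍ₛ₎b)`, is an associative dialgebra. -/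
theorem assocConformal_gives_assocDialgebra
    {k : Type*} [Field k] [CharZero k] {C : Type*} [AddCommGroup C] [Module k C]
    (T : C →ₗ[k] C) (p : ℕ → C →ₗ[k] C →ₗ[k] C)
    (hloc : ∀ a b : C, ∃ N : ℕ, ∀ n : ℕ, N ≤ n → p n a b = 0)
    (hTl0 : ∀ a b : C, p 0 (T a) b = 0)
    (hTl : ∀ (n : ℕ) (a b : C), p (n + 1) (T a) b = -(((n + 1 : ℕ) : k)) • p n a b)
    (hTr0 : ∀ a b : C, p 0 a (T b) = T (p 0 a b))
    (hTr : ∀ (n : ℕ) (a b : C),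
      p (n + 1) a (T b) = T (p (n + 1) a b) + ((n + 1 : ℕ) : k) • p n a b)
    (hassoc : ∀ (n m : ℕ) (a b c : C),
      p n a (p m b c) =
        ∑ s ∈ Finset.range (n + 1), ((n.choose s : ℕ) : k) • p (m + s) (p (n - s) a b) c)
    (l r : C → C → C)
    (hl : ∀ a b : C, l a b = conformalDashLeft T p a b)
    (hr : ∀ a b : C, r a b = p 0 a b) :
    (∀ x y z : C, r (l x y) z = r (r x y) z) ∧
    (∀ x y z : C, l x (r y z) = l x (l y z)) ∧
    (∀ x y z : C, r (r x y) z = r x (r y z)) ∧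
    (∀ x y z : C, l (l x y) z = l x (l y z)) ∧
    (∀ x y z : C, l (r x y) z = r x (l y z)) := by
  have h01 : ∀ (s : ℕ) (x y z : C), p 0 x (p s y z) = p s (p 0 x y) z :=
    fun s x y z => hassoc01 p hassoc s x y z
  refine ⟨?_, ?_, ?_, ?_, ?_⟩
  · intro x y z
    simp only [hl, hr]
    rw [pm_cdl T p hloc hTl0 hTl hassoc 0 x y z, h01 0 x y z]
  · intro x y z
    simp only [hl, hr]
    obtain ⟨u, hu⟩ := cdl_shift T p hloc y z
    rw [hu, cdl_add_right T p hloc, cdl_T_right T p hloc hTr0 hTr, add_zero]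
  · intro x y z
    simp only [hr]
    exact (h01 0 x y z).symm
  · intro x y z
    simp only [hl]
    have step1 : conformalDashLeft T p (conformalDashLeft T p x y) z
        = conformalDashLeft T p x (p 0 y z) := by
      rw [cdl_def, cdl_def]
      exact finsum_congr fun s => by rw [← cdl_def T p x y, pm_cdl T p hloc hTl0 hTl hassoc s x y z]
    obtain ⟨u, hu⟩ := cdl_shift T p hloc y z
    rw [step1, hu, cdl_add_right T p hloc, cdl_T_right T p hloc hTr0 hTr, add_zero]
  · intro x y z
    simp only [hl, hr]
    obtain ⟨N, hN⟩ := hloc y z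
    have hb : ∀ n, N ≤ n → p n (p 0 x y) z = 0 := by
      intro n hn
      rw [← h01 n x y z, hN n hn]
      exact map_zero _
    rw [cdl_eq_sum T p (p 0 x y) z N hb, cdl_eq_sum T p y z N hN, map_sum]
    refine Finset.sum_congr rfl fun s _ => ?_
    rw [map_smul, p0_pow T p hTr0 s x (p s y z), h01 s x y z]
end

section
/- Let g be a right Leibniz algebra over a field k, V a k-vector space, and π : g → End(V) a k-linear map satisfying π([a,b]) = π(a)π(b) − π(b)π(a) for all a,b ∈ g. Let M₀ = V ⊕ (g ⊗ V) and for x ∈ g define ρ₀(x), ρ₁(x) ∈ End(M₀) by ρ₀(x)(v) = π(x)v, ρ₀(x)(a⊗v) = a⊗π(x)v − [a,x]⊗v, ρ₁(x)(v) = x⊗v, ρ₁(x)(a⊗v) = 0 (v ∈ V, a ∈ g). Then for all a,b ∈ g: ρ₀([a,b]) = ρ₀(a)ρ₀(b) − ρ₀(b)ρ₀(a), ρ₁([a,b]) = ρ₁(a)ρ₀(b) − ρ₀(b)ρ₁(a), and ρ₁(a)ρ₁(b) = 0. -/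
/-!
A linear endomorphism of `V × (g ⊗ V)` is determined by its values on `(v, 0)` and on
`(0, a ⊗ v)`, so each relation is checked on these generators. On `(v, 0)` all three reduce to
the definitions together with `π([a, b]) = [π a, π b]`. On `(0, c ⊗ v)` the first relation
leaves, besides `c ⊗ [π a, π b] v`, the term `([[c, b], a] - [[c, a], b]) ⊗ v`, which the
right Leibniz identity turns into `-[c, [a, b]] ⊗ v`; the other two relations vanish there.
-/

open scoped TensorProduct

section ProdTensor

variable {R V M N P : Type*} [CommRing R] [AddCommGroup V] [AddCommGroup M] [AddCommGroup N]
  [AddCommGroup P] [Module R V] [Module R M] [Module R N] [Module R P]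

theorem LinearMap.prod_tensorProduct_ext {f h : V × (M ⊗[R] N) →ₗ[R] P}
    (hv : ∀ v, f (v, 0) = h (v, 0)) (ht : ∀ m n, f (0, m ⊗ₜ n) = h (0, m ⊗ₜ n)) : f = h :=
  LinearMap.prod_ext (LinearMap.ext hv) (TensorProduct.ext' ht)

theorem LinearMap.map_zero_sub_prod (f : V × N →ₗ[R] P) (p q : N) :
    f (0, p - q) = f (0, p) - f (0, q) := by
  simpa using map_sub f (0, p) (0, q)

end ProdTensor

section Relations

variable {k g V : Type*} [CommRing k] [AddCommGroup g] [Module k g] [AddCommGroup V] [Module k V]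
  (br : g →ₗ[k] g →ₗ[k] g) (π : g →ₗ[k] Module.End k V)
  (ρ₀ ρ₁ : g → Module.End k (V × (g ⊗[k] V)))

theorem rho0_bracket (hLeib : ∀ x y z : g, br (br x y) z = br (br x z) y + br x (br y z))
    (hπ : ∀ a b : g, π (br a b) = π a * π b - π b * π a)
    (hρ₀v : ∀ (x : g) (v : V), ρ₀ x (v, 0) = (π x v, 0))
    (hρ₀t : ∀ (x a : g) (v : V),
      ρ₀ x (0, a ⊗ₜ[k] v) = (0, a ⊗ₜ[k] (π x v) - (br a x) ⊗ₜ[k] v)) (a b : g) :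
    ρ₀ (br a b) = ρ₀ a * ρ₀ b - ρ₀ b * ρ₀ a := by
  refine LinearMap.prod_tensorProduct_ext (fun v => ?_) (fun c v => ?_)
  · simp [Module.End.mul_apply, hρ₀v, hπ]
  · have hc : br c (br a b) = br (br c a) b - br (br c b) a := by
      rw [hLeib c a b]; abel
    simp only [LinearMap.sub_apply, Module.End.mul_apply, hρ₀t, LinearMap.map_zero_sub_prod, hπ,
      hc, TensorProduct.tmul_sub, TensorProduct.sub_tmul]
    ext <;> simp; abel

theorem rho1_bracket (hρ₀v : ∀ (x : g) (v : V), ρ₀ x (v, 0) = (π x v, 0))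
    (hρ₀t : ∀ (x a : g) (v : V),
      ρ₀ x (0, a ⊗ₜ[k] v) = (0, a ⊗ₜ[k] (π x v) - (br a x) ⊗ₜ[k] v))
    (hρ₁v : ∀ (x : g) (v : V), ρ₁ x (v, 0) = (0, x ⊗ₜ[k] v))
    (hρ₁t : ∀ (x a : g) (v : V), ρ₁ x (0, a ⊗ₜ[k] v) = 0) (a b : g) :
    ρ₁ (br a b) = ρ₁ a * ρ₀ b - ρ₀ b * ρ₁ a := by
  refine LinearMap.prod_tensorProduct_ext (fun v => ?_) (fun c v => ?_)
  · simp only [LinearMap.sub_apply, Module.End.mul_apply, hρ₁v, hρ₀v, hρ₀t]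
    ext <;> simp
  · simp [Module.End.mul_apply, hρ₁t, hρ₀t, LinearMap.map_zero_sub_prod]

theorem rho1_mul_rho1 (hρ₁v : ∀ (x : g) (v : V), ρ₁ x (v, 0) = (0, x ⊗ₜ[k] v))
    (hρ₁t : ∀ (x a : g) (v : V), ρ₁ x (0, a ⊗ₜ[k] v) = 0) (a b : g) :
    ρ₁ a * ρ₁ b = 0 :=
  LinearMap.prod_tensorProduct_ext (fun v => by simp [Module.End.mul_apply, hρ₁v, hρ₁t])
    (fun c v => by simp [Module.End.mul_apply, hρ₁t])

end Relations

/-- For a right Leibniz algebra `g`, a `k`-linear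
representation `π : g → End(V)`, and the maps `ρ₀, ρ₁` on
`M₀ = V ⊕ (g ⊗ V)` defined by `ρ₀(x)(v) = π(x)v`,
`ρ₀(x)(a⊗v) = a⊗π(x)v - [a,x]⊗v`, `ρ₁(x)(v) = x⊗v`, `ρ₁(x)(a⊗v) = 0`,
one has `ρ₀([a,b]) = [ρ₀(a), ρ₀(b)]`, `ρ₁([a,b]) = ρ₁(a)ρ₀(b) - ρ₀(b)ρ₁(a)`
and `ρ₁(a)ρ₁(b) = 0`. -/
theorem leibniz_conformal_rep_relations
    {k : Type*} [Field k] {g : Type*} [AddCommGroup g] [Module k g]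
    {V : Type*} [AddCommGroup V] [Module k V]
    (br : g →ₗ[k] g →ₗ[k] g)
    (hLeib : ∀ x y z : g, br (br x y) z = br (br x z) y + br x (br y z))
    (π : g →ₗ[k] Module.End k V)
    (hπ : ∀ a b : g, π (br a b) = π a * π b - π b * π a)
    (ρ₀ ρ₁ : g → Module.End k (V × (g ⊗[k] V)))
    (hρ₀v : ∀ (x : g) (v : V), ρ₀ x (v, 0) = (π x v, 0))
    (hρ₀t : ∀ (x a : g) (v : V),
      ρ₀ x (0, a ⊗ₜ[k] v) = (0, a ⊗ₜ[k] (π x v) - (br a x) ⊗ₜ[k] v))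
    (hρ₁v : ∀ (x : g) (v : V), ρ₁ x (v, 0) = (0, x ⊗ₜ[k] v))
    (hρ₁t : ∀ (x a : g) (v : V), ρ₁ x (0, a ⊗ₜ[k] v) = 0) :
    ∀ a b : g,
      ρ₀ (br a b) = ρ₀ a * ρ₀ b - ρ₀ b * ρ₀ a ∧
      ρ₁ (br a b) = ρ₁ a * ρ₀ b - ρ₀ b * ρ₁ a ∧
      ρ₁ a * ρ₁ b = 0 := fun a b =>
  ⟨rho0_bracket br π ρ₀ hLeib hπ hρ₀v hρ₀t a b, rho1_bracket br π ρ₀ ρ₁ hρ₀v hρ₀t hρ₁v hρ₁t a b,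
    rho1_mul_rho1 ρ₁ hρ₁v hρ₁t a b⟩
end

section
/- Let g be a right Leibniz algebra over a field k, V a nonzero k-vector space, and π : g → End(V) a k-linear map with π([a,b]) = π(a)π(b) − π(b)π(a). With M₀ = V ⊕ (g ⊗ V) and ρ₀, ρ₁ defined by ρ₀(x)(v) = π(x)v, ρ₀(x)(a⊗v) = a⊗π(x)v − [a,x]⊗v, ρ₁(x)(v) = x⊗v, ρ₁(x)(a⊗v) = 0, the map x ↦ ρ₁(x) is injective; consequently the map g → End(M₀) × End(M₀), x ↦ (ρ₀(x), ρ₁(x)), is injective. (This yields a faithful conformal representation of the Leibniz algebra g, finite whenever dim g < ∞ and dim V < ∞.) -/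
open scoped TensorProduct

/-- With the data of Statement 13 and `V ≠ 0`, the map
`x ↦ ρ₁(x)` is injective; consequently `x ↦ (ρ₀(x), ρ₁(x))` is injective
(a faithful conformal representation of the Leibniz algebra `g`). -/
theorem leibniz_conformal_rep_faithful
    {k : Type*} [Field k] {g : Type*} [AddCommGroup g] [Module k g]
    {V : Type*} [AddCommGroup V] [Module k V] [Nontrivial V]
    (br : g →ₗ[k] g →ₗ[k] g)
    (hLeib : ∀ x y z : g, br (br x y) z = br (br x z) y + br x (br y z))
    (π : g →ₗ[k] Module.End k V)
    (hπ : ∀ a b : g, π (br a b) = π a * π b - π b * π a)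
    (ρ₀ ρ₁ : g → Module.End k (V × (g ⊗[k] V)))
    (hρ₀v : ∀ (x : g) (v : V), ρ₀ x (v, 0) = (π x v, 0))
    (hρ₀t : ∀ (x a : g) (v : V),
      ρ₀ x (0, a ⊗ₜ[k] v) = (0, a ⊗ₜ[k] (π x v) - (br a x) ⊗ₜ[k] v))
    (hρ₁v : ∀ (x : g) (v : V), ρ₁ x (v, 0) = (0, x ⊗ₜ[k] v))
    (hρ₁t : ∀ (x a : g) (v : V), ρ₁ x (0, a ⊗ₜ[k] v) = 0) :
    Function.Injective ρ₁ ∧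
    Function.Injective (fun x : g => (ρ₀ x, ρ₁ x)) := by
  have hinj : Function.Injective ρ₁ := by
    intro x y hxy
    obtain ⟨v, hv⟩ := exists_ne (0 : V)
    have h2 : x ⊗ₜ[k] v = y ⊗ₜ[k] v := by
      have h1 : ((0 : V), x ⊗ₜ[k] v) = ((0 : V), y ⊗ₜ[k] v) := by
        rw [← hρ₁v x v, ← hρ₁v y v, hxy]
      exact congrArg Prod.snd h1
    obtain ⟨f, hf⟩ : ∃ f : Module.Dual k V, f v ≠ 0 := by
      by_contra h
      push_neg at h
      exact hv ((Module.forall_dual_apply_eq_zero_iff k v).mp h)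
    let φ : g ⊗[k] V →ₗ[k] g :=
      (TensorProduct.rid k g).toLinearMap ∘ₗ LinearMap.lTensor g f
    have hφ : ∀ (a : g) (w : V), φ (a ⊗ₜ[k] w) = f w • a := by
      intro a w
      simp [φ]
    have h3 : f v • x = f v • y := by
      rw [← hφ x v, ← hφ y v, h2]
    exact smul_right_injective g hf h3
  refine ⟨hinj, fun x y h => hinj ?_⟩
  exact congrArg Prod.snd h
end

section
/- Let L be a Lie algebra over a field k and let D = k[T] ⊗ L. Define bilinear operations on D by (f⊗x)⊢(g⊗y) := f(0)·g ⊗ [x,y] and (f⊗x)⊣(g⊗y) := g(0)·f ⊗ [x,y] (for f,g ∈ k[T], x,y ∈ L, extended bilinearly). Then D is a 0-dialgebra satisfying a⊣b = −(b⊢a) and a⊢(b⊢c) = (a⊢b)⊢c + b⊢(a⊢c) for all a,b,c ∈ D. In particular, D with the operation a·b := a⊢b is a left Leibniz algebra (the dialgebra attached to the current Lie conformal algebra over L). -/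
open scoped TensorProduct

/-- For a Lie algebra `L` over a field `k`, the current
space `D = k[T] ⊗ L` with `(f⊗x) ⊢ (g⊗y) := f(0)·g ⊗ [x,y]` and
`(f⊗x) ⊣ (g⊗y) := g(0)·f ⊗ [x,y]` is a 0-dialgebra satisfying
`a ⊣ b = -(b ⊢ a)` and the left Leibniz identity for `⊢`; in particular
`a·b := a ⊢ b` makes `D` a left Leibniz algebra. -/
theorem currentLieConformal_dialgebra
    {k : Type*} [Field k] {L : Type*} [LieRing L] [LieAlgebra k L]
    (l r : (Polynomial k ⊗[k] L) →ₗ[k] (Polynomial k ⊗[k] L) →ₗ[k] (Polynomial k ⊗[k] L))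
    (hr : ∀ (f g : Polynomial k) (x y : L),
      r (f ⊗ₜ[k] x) (g ⊗ₜ[k] y) = f.coeff 0 • (g ⊗ₜ[k] ⁅x, y⁆))
    (hl : ∀ (f g : Polynomial k) (x y : L),
      l (f ⊗ₜ[k] x) (g ⊗ₜ[k] y) = g.coeff 0 • (f ⊗ₜ[k] ⁅x, y⁆)) :
    (∀ a b c : Polynomial k ⊗[k] L, r (l a b) c = r (r a b) c) ∧
    (∀ a b c : Polynomial k ⊗[k] L, l a (r b c) = l a (l b c)) ∧
    (∀ a b : Polynomial k ⊗[k] L, l a b = -(r b a)) ∧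
    (∀ a b c : Polynomial k ⊗[k] L, r a (r b c) = r (r a b) c + r b (r a c)) := by
  refine ⟨?_, ?_, ?_, ?_⟩
  · intro a b c
    induction a using TensorProduct.induction_on with
    | zero => simp
    | add u v hu hv => simp [hu, hv]
    | tmul f x =>
      induction b using TensorProduct.induction_on with
      | zero => simp
      | add u v hu hv => simp [hu, hv]
      | tmul g y =>
        induction c using TensorProduct.induction_on with
        | zero => simp
        | add u v hu hv => simp [hu, hv]
        | tmul h z =>
          simp only [hr, hl, map_smul, LinearMap.smul_apply]
          module
  · intro a b c
    induction a using TensorProduct.induction_on with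
    | zero => simp
    | add u v hu hv => simp [hu, hv]
    | tmul f x =>
      induction b using TensorProduct.induction_on with
      | zero => simp
      | add u v hu hv => simp [hu, hv]
      | tmul g y =>
        induction c using TensorProduct.induction_on with
        | zero => simp
        | add u v hu hv => simp [hu, hv]
        | tmul h z =>
          simp only [hr, hl, map_smul, LinearMap.smul_apply]
          module
  · intro a b
    induction a using TensorProduct.induction_on with
    | zero => simp
    | add u v hu hv => simp [hu, hv]; abel
    | tmul f x =>
      induction b using TensorProduct.induction_on with
      | zero => simp
      | add u v hu hv => simp [hu, hv]; abel
      | tmul g y =>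
        rw [hl, hr, ← lie_skew x y, TensorProduct.tmul_neg, smul_neg]
  · intro a b c
    induction a using TensorProduct.induction_on with
    | zero => simp
    | add u v hu hv => simp [hu, hv]; abel
    | tmul f x =>
      induction b using TensorProduct.induction_on with
      | zero => simp
      | add u v hu hv => simp [hu, hv]; abel
      | tmul g y =>
        induction c using TensorProduct.induction_on with
        | zero => simp
        | add u v hu hv => simp [hu, hv]; abel
        | tmul h z =>
          simp only [hr, map_smul, LinearMap.smul_apply, leibniz_lie x y z,
            TensorProduct.tmul_add, smul_add]
          module
end
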